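/- Let h(ξ) = |1 − r²ξ|^{−1} on the unit circle, where 0 ≤ r < 1. Then every Fourier coefficient ĥ(n) of h is non-negative, and for every probability measure τ on the unit circle, ∫∫ |1 − r²ξ η̄|^{−1} dτ(η) dτ(ξ) ≥ (1/2π)∫₀^{2π} |1 − r²e^{it}|^{−1} dt. -/

import Mathlib

/-!
Write `h(z) = |1 - z|⁻¹ = g(z) · conj (g(z))` with `g(z) = (1 - z)^(-1/2) = ∑ aₙ zⁿ`, whose
Taylor coefficients `aₙ = multichoose (1/2) n` are positive. Hence, for `|w| = 1` and `0 ≤ ρ < 1`,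
`|1 - ρw|⁻¹ = ∑_{k,l} c_{kl} wᵏ w̄ˡ` with `c_{kl} = a_k a_l ρ^{k+l} ≥ 0` summable.
Integrating against `e^{-int}` gives `ĥ(n) = ∑_{k-l=n} c_{kl} ≥ 0`. With `w = ξη̄`, the kernel
splits as `∑ c_{kl} f_{kl}(ξ) conj (f_{kl}(η))` with `f_{kl}(ξ) = ξᵏ ξ̄ˡ`, so the double
integral is `∑ c_{kl} |∫ f_{kl} dτ|²`; the diagonal terms alone contribute `∑ c_{kk} = ĥ(0)`.
-/

open MeasureTheory Complex
open scoped Real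

noncomputable instance : MeasurableSpace Circle := borel Circle
instance : BorelSpace Circle := ⟨rfl⟩

/-- The `n`-th Fourier coefficient of `h(ξ) = |1 − r²ξ|⁻¹` on the unit circle:
`ĥ(n) = (1/2π) ∫₀^{2π} h(e^{it}) e^{−int} dt`. -/
noncomputable def hHat (r : ℝ) (n : ℤ) : ℂ :=
  (1 / (2 * π) : ℂ) *
    ∫ t in (0 : ℝ)..(2 * π),
      ((‖(1 : ℂ) - (r : ℂ) ^ 2 * Complex.exp (t * Complex.I)‖⁻¹ : ℝ) : ℂ) *
        Complex.exp (-(n : ℂ) * t * Complex.I)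

open ComplexConjugate

lemma multichoose_pos {x : ℝ} (hx : 0 < x) (n : ℕ) : 0 < Ring.multichoose x n := by
  have h := Ring.factorial_nsmul_multichoose_eq_ascPochhammer x n
  rw [nsmul_eq_mul, Polynomial.ascPochhammer_smeval_eq_eval] at h
  have : 0 < (n.factorial : ℝ) * Ring.multichoose x n := h ▸ ascPochhammer_pos n x hx
  exact pos_of_mul_pos_right this (by positivity)

noncomputable def invSqrtCoeff (n : ℕ) : ℝ := Ring.multichoose (2⁻¹ : ℝ) n

lemma invSqrtCoeff_nonneg (n : ℕ) : 0 ≤ invSqrtCoeff n :=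
  (multichoose_pos (by norm_num) n).le

lemma hasFPowerSeriesOnBall_inv_sqrt_one_sub :
    HasFPowerSeriesOnBall (fun z : ℂ ↦ 1 / (1 - z) ^ (2⁻¹ : ℂ))
      (.ofScalars ℂ fun n ↦ (invSqrtCoeff n : ℂ)) 0 1 := by
  have hcoeff :
      (fun n ↦ (invSqrtCoeff n : ℂ)) = fun n : ℕ ↦ Ring.choose ((2⁻¹ : ℂ) + n - 1) n := by
    ext n
    rw [invSqrtCoeff, ← ofRealHom_eq_coe, Ring.map_multichoose, Ring.multichoose_eq, map_inv₀,
      map_ofNat]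
  rw [hcoeff]
  exact one_div_one_sub_cpow_hasFPowerSeriesOnBall_zero 2⁻¹

lemma hasSum_inv_sqrt_one_sub {z : ℂ} (hz : ‖z‖ < 1) :
    HasSum (fun n ↦ (invSqrtCoeff n : ℂ) * z ^ n) (1 / (1 - z) ^ (2⁻¹ : ℂ)) := by
  simpa only [FormalMultilinearSeries.ofScalars_apply_eq, smul_eq_mul, zero_add] using
    hasFPowerSeriesOnBall_inv_sqrt_one_sub.hasSum (y := z) (by simpa [← ofReal_norm] using hz)

lemma summable_norm_inv_sqrt_one_sub {z : ℂ} (hz : ‖z‖ < 1) :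
    Summable (fun n ↦ ‖(invSqrtCoeff n : ℂ) * z ^ n‖) := by
  have hz' : z ∈ Metric.eball (0 : ℂ)
      (FormalMultilinearSeries.ofScalars ℂ fun n ↦ (invSqrtCoeff n : ℂ)).radius :=
    Metric.eball_subset_eball hasFPowerSeriesOnBall_inv_sqrt_one_sub.r_le
      (by simpa [← ofReal_norm] using hz)
  simpa only [FormalMultilinearSeries.ofScalars_apply_eq, smul_eq_mul] using
    FormalMultilinearSeries.summable_norm_apply _ hz'

lemma norm_inv_sqrt_sq (z : ℂ) : ‖1 / (1 - z) ^ (2⁻¹ : ℂ)‖ ^ 2 = ‖1 - z‖⁻¹ := by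
  rw [norm_div, norm_one, show (2⁻¹ : ℂ) = ((2⁻¹ : ℝ) : ℂ) by push_cast; rfl, norm_cpow_real,
    div_pow, one_pow, ← Real.rpow_natCast, ← Real.rpow_mul (norm_nonneg _)]
  norm_num

lemma hasSum_inv_norm_one_sub {z : ℂ} (hz : ‖z‖ < 1) :
    HasSum (fun kl : ℕ × ℕ ↦ ((invSqrtCoeff kl.1 * invSqrtCoeff kl.2 : ℝ) : ℂ)
        * (z ^ kl.1 * conj z ^ kl.2)) (‖1 - z‖⁻¹ : ℝ) := by
  have hg := hasSum_inv_sqrt_one_sub hz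
  have hg_conj : HasSum (fun n ↦ (invSqrtCoeff n : ℂ) * conj z ^ n)
      (conj (1 / (1 - z) ^ (2⁻¹ : ℂ))) := by
    simpa only [map_mul, map_pow, conj_ofReal] using Complex.hasSum_conj'.mpr hg
  have hsum := summable_mul_of_summable_norm (summable_norm_inv_sqrt_one_sub hz)
    (summable_norm_inv_sqrt_one_sub (z := conj z) (by rwa [RCLike.norm_conj]))
  have hprod :
      ((‖1 - z‖⁻¹ : ℝ) : ℂ) = 1 / (1 - z) ^ (2⁻¹ : ℂ) * conj (1 / (1 - z) ^ (2⁻¹ : ℂ)) := by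
    rw [Complex.mul_conj, Complex.normSq_eq_norm_sq, norm_inv_sqrt_sq]
  rw [hprod]
  refine (hg.mul hg_conj hsum).congr_fun fun kl ↦ ?_
  rw [ofReal_mul]
  ring

noncomputable def kernelCoeff (ρ : ℝ) (kl : ℕ × ℕ) : ℝ :=
  invSqrtCoeff kl.1 * invSqrtCoeff kl.2 * ρ ^ (kl.1 + kl.2)

lemma kernelCoeff_nonneg {ρ : ℝ} (hρ : 0 ≤ ρ) (kl : ℕ × ℕ) : 0 ≤ kernelCoeff ρ kl := by
  have := invSqrtCoeff_nonneg kl.1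
  have := invSqrtCoeff_nonneg kl.2
  unfold kernelCoeff
  positivity

lemma hasSum_inv_norm_one_sub_mul {ρ : ℝ} (hρ : |ρ| < 1) {w : ℂ} (hw : ‖w‖ = 1) :
    HasSum (fun kl : ℕ × ℕ ↦ (kernelCoeff ρ kl : ℂ) * (w ^ kl.1 * conj w ^ kl.2))
      (‖1 - ρ * w‖⁻¹ : ℝ) := by
  have hρw : ‖(ρ : ℂ) * w‖ < 1 := by rwa [norm_mul, hw, mul_one, norm_real, Real.norm_eq_abs]
  refine (hasSum_inv_norm_one_sub hρw).congr_fun fun kl ↦ ?_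
  simp only [kernelCoeff, map_mul, conj_ofReal, mul_pow, pow_add, ofReal_mul, ofReal_pow]
  ring

lemma summable_kernelCoeff {ρ : ℝ} (hρ : |ρ| < 1) : Summable (kernelCoeff ρ) := by
  simpa using (hasSum_inv_norm_one_sub_mul hρ (w := 1) (by simp)).summable

section Integration

variable {α : Type*} [MeasurableSpace α] {μ : Measure α} [IsFiniteMeasure μ]

lemma hasSum_integral_of_norm_le {ι E : Type*} [Countable ι] [NormedAddCommGroup E]
    [NormedSpace ℝ E] {F : ι → α → E} {f : α → E} {c : ι → ℝ}
    (hF : ∀ i, AEStronglyMeasurable (F i) μ) (hFc : ∀ i x, ‖F i x‖ ≤ c i) (hc : Summable c)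
    (hFf : ∀ x, HasSum (fun i ↦ F i x) (f x)) :
    HasSum (fun i ↦ ∫ x, F i x ∂μ) (∫ x, f x ∂μ) :=
  hasSum_integral_of_dominated_convergence (fun i _ ↦ c i) hF (fun i ↦ ae_of_all _ (hFc i))
    (ae_of_all _ fun _ ↦ hc) (integrable_const _) (ae_of_all _ hFf)

lemma hasSum_integral_integral_of_hasSum_kernel {ι : Type*} [Countable ι] {c : ι → ℝ}
    (hc : Summable c) {f : ι → α → ℂ} (hf : ∀ i, AEStronglyMeasurable (f i) μ)
    (hf_le : ∀ i x, ‖f i x‖ ≤ 1) {K : α → α → ℝ}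
    (hK : ∀ x y, HasSum (fun i ↦ (c i : ℂ) * (f i x * conj (f i y))) (K x y)) :
    HasSum (fun i ↦ c i * normSq (∫ x, f i x ∂μ)) (∫ x, ∫ y, K x y ∂μ ∂μ) := by
  have hterm_le : ∀ i x y, ‖(c i : ℂ) * (f i x * conj (f i y))‖ ≤ |c i| := fun i x y ↦ by
    rw [norm_mul, norm_mul, RCLike.norm_conj, norm_real, Real.norm_eq_abs]
    exact mul_le_of_le_one_right (abs_nonneg _)
      (mul_le_one₀ (hf_le i x) (norm_nonneg _) (hf_le i y))
  have hinner : ∀ x, HasSum (fun i ↦ (c i : ℂ) * f i x * conj (∫ y, f i y ∂μ))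
      (∫ y, (K x y : ℂ) ∂μ) := by
    intro x
    have hmeas : ∀ i, AEStronglyMeasurable (fun y ↦ (c i : ℂ) * (f i x * conj (f i y))) μ :=
      fun i ↦ (((hf i).star).const_mul (f i x)).const_mul _
    refine (hasSum_integral_of_norm_le hmeas (hterm_le · x) hc.abs (hK x)).congr_fun fun i ↦ ?_
    rw [integral_const_mul, integral_const_mul, integral_conj, mul_assoc]
  have hmoment_le : ∀ i, ‖∫ y, f i y ∂μ‖ ≤ μ.real Set.univ := fun i ↦ by
    simpa only [one_mul] using norm_integral_le_of_norm_le_const (ae_of_all _ (hf_le i))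
  have houter_le :
      ∀ i x, ‖(c i : ℂ) * f i x * conj (∫ y, f i y ∂μ)‖ ≤ |c i| * μ.real Set.univ := fun i x ↦ by
    rw [norm_mul, norm_mul, RCLike.norm_conj, norm_real, Real.norm_eq_abs, mul_assoc]
    gcongr
    exact mul_le_of_le_one_left (norm_nonneg _) (hf_le i x) |>.trans (hmoment_le i)
  have houter := hasSum_integral_of_norm_le (μ := μ)
    (fun i ↦ ((hf i).const_mul (c i : ℂ)).mul_const _) houter_le (hc.abs.mul_right _) hinner
  simp only [integral_mul_const, integral_const_mul, mul_assoc, mul_conj, integral_complex_ofReal,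
    ← ofReal_mul] at houter
  exact hasSum_ofReal.mp houter

end Integration

lemma integral_exp_int_mul_I (m : ℤ) :
    ∫ t in (0 : ℝ)..2 * π, exp (m * t * I) = if m = 0 then ((2 * π : ℝ) : ℂ) else 0 := by
  split_ifs with hm
  · simp [hm]
  · have hmI : (m : ℂ) * I ≠ 0 := mul_ne_zero (Int.cast_ne_zero.mpr hm) I_ne_zero
    simp_rw [mul_right_comm _ _ I]
    rw [integral_exp_mul_complex hmI]
    have hperiod : exp (m * I * ((2 * π : ℝ) : ℂ)) = 1 := by
      rw [← exp_int_mul_two_pi_mul_I m]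
      push_cast
      ring_nf
    rw [hperiod, ofReal_zero, mul_zero, exp_zero, sub_self, zero_div]

lemma fourierCoeff_eq_tsum_of_hasSum {ι : Type*} [Countable ι] {c : ι → ℝ} (hc : Summable c)
    (d : ι → ℤ) {F : ℝ → ℂ} (hF : ∀ t : ℝ, HasSum (fun i ↦ (c i : ℂ) * exp (d i * t * I)) (F t))
    (n : ℤ) :
    (1 / (2 * π) : ℂ) * ∫ t in (0 : ℝ)..2 * π, F t * exp (-n * t * I)
      = ((∑' i, {i | d i = n}.indicator c i : ℝ) : ℂ) := by
  have hterm : ∀ t : ℝ, HasSum (fun i ↦ (c i : ℂ) * exp ((d i - n : ℤ) * t * I))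
      (F t * exp (-n * t * I)) := fun t ↦ by
    refine ((hF t).mul_right _).congr_fun fun i ↦ ?_
    rw [mul_assoc _ (exp _), ← exp_add]
    push_cast
    ring_nf
  have hint := intervalIntegral.hasSum_integral_of_dominated_convergence (μ := volume)
    (a := 0) (b := 2 * π) (fun i _ ↦ |c i|)
    (fun i ↦ by fun_prop) (fun i ↦ ae_of_all _ fun t _ ↦ by simp [norm_exp])
    (ae_of_all _ fun _ _ ↦ hc.abs) intervalIntegrable_const (ae_of_all _ fun t _ ↦ hterm t)
  have hvalue : ∀ i, ∫ t in (0 : ℝ)..2 * π, (c i : ℂ) * exp ((d i - n : ℤ) * t * I)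
      = ((2 * π * {i | d i = n}.indicator c i : ℝ) : ℂ) := fun i ↦ by
    rw [intervalIntegral.integral_const_mul, integral_exp_int_mul_I]
    by_cases hi : d i = n <;> simp [hi, sub_eq_zero, mul_comm]
  simp_rw [hvalue] at hint
  rw [hint.unique (hasSum_ofReal.mpr ((hc.indicator _).hasSum.mul_left (2 * π)))]
  push_cast
  field_simp

lemma exp_mul_I_pow_mul_conj_pow (t : ℝ) (k l : ℕ) :
    exp (t * I) ^ k * conj (exp (t * I)) ^ l = exp (((k : ℤ) - l : ℤ) * t * I) := by
  rw [← exp_conj, map_mul, conj_ofReal, conj_I, ← exp_nat_mul, ← exp_nat_mul, ← exp_add]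
  push_cast
  ring_nf

lemma hHat_eq_tsum {r : ℝ} (hr : |r ^ 2| < 1) (n : ℤ) :
    hHat r n = ((∑' kl, {kl : ℕ × ℕ | (kl.1 : ℤ) - kl.2 = n}.indicator
      (kernelCoeff (r ^ 2)) kl : ℝ) : ℂ) := by
  refine fourierCoeff_eq_tsum_of_hasSum (summable_kernelCoeff hr) (fun kl ↦ kl.1 - kl.2)
    (fun t ↦ ?_) n
  simpa only [exp_mul_I_pow_mul_conj_pow, ofReal_pow] using
    hasSum_inv_norm_one_sub_mul hr (norm_exp_ofReal_mul_I t)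

lemma hHat_zero (r : ℝ) : hHat r 0 = ((1 / (2 * π) * ∫ t in (0 : ℝ)..2 * π,
    ‖(1 : ℂ) - (r : ℂ) ^ 2 * exp (t * I)‖⁻¹ : ℝ) : ℂ) := by
  simp only [hHat, Int.cast_zero, neg_zero, zero_mul, exp_zero, mul_one,
    intervalIntegral.integral_ofReal]
  push_cast
  rfl

lemma hasSum_circle_kernel {ρ : ℝ} (hρ : |ρ| < 1) (ξ η : Circle) :
    HasSum (fun kl : ℕ × ℕ ↦ (kernelCoeff ρ kl : ℂ) *
        ((ξ : ℂ) ^ kl.1 * conj (ξ : ℂ) ^ kl.2 * conj ((η : ℂ) ^ kl.1 * conj (η : ℂ) ^ kl.2)))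
      (‖1 - ρ * (ξ : ℂ) * conj (η : ℂ)‖⁻¹ : ℝ) := by
  have hw : ‖(ξ : ℂ) * conj (η : ℂ)‖ = 1 := by simp [Circle.norm_coe]
  rw [mul_assoc]
  refine (hasSum_inv_norm_one_sub_mul hρ hw).congr_fun fun kl ↦ ?_
  simp only [map_mul, map_pow, conj_conj]
  ring

lemma integral_pow_mul_conj_pow_self (τ : Measure Circle) [IsProbabilityMeasure τ] (k : ℕ) :
    ∫ ξ : Circle, (ξ : ℂ) ^ k * conj (ξ : ℂ) ^ k ∂τ = 1 := by
  simp [← mul_pow, mul_conj, Circle.normSq_coe]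

lemma indicator_diagonal_le_mul_normSq_moment (τ : Measure Circle) [IsProbabilityMeasure τ]
    {ρ : ℝ} (hρ : 0 ≤ ρ) (kl : ℕ × ℕ) :
    {kl : ℕ × ℕ | (kl.1 : ℤ) - kl.2 = 0}.indicator (kernelCoeff ρ) kl
      ≤ kernelCoeff ρ kl * normSq (∫ ξ : Circle, (ξ : ℂ) ^ kl.1 * conj (ξ : ℂ) ^ kl.2 ∂τ) := by
  by_cases hkl : kl ∈ {kl : ℕ × ℕ | (kl.1 : ℤ) - kl.2 = 0}
  · rw [Set.indicator_of_mem hkl]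
    obtain ⟨k, l⟩ := kl
    obtain rfl : l = k := by rw [Set.mem_ofPred_eq] at hkl; omega
    rw [integral_pow_mul_conj_pow_self, map_one, mul_one]
  · rw [Set.indicator_of_notMem hkl]
    exact mul_nonneg (kernelCoeff_nonneg hρ _) (normSq_nonneg _)

/-- Every Fourier coefficient of `h(ξ) = |1 − r²ξ|⁻¹` (for `0 ≤ r < 1`) is non-negative,
and for every probability measure `τ` on the unit circle,
`∫∫ |1 − r²ξη̄|⁻¹ dτ(η) dτ(ξ) ≥ (1/2π)∫₀^{2π} |1 − r²e^{it}|⁻¹ dt`. -/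
theorem stmt8 (r : ℝ) (hr0 : 0 ≤ r) (hr1 : r < 1)
    (τ : Measure Circle) [IsProbabilityMeasure τ] :
    (∀ n : ℤ, 0 ≤ (hHat r n).re ∧ (hHat r n).im = 0) ∧
    (1 / (2 * π)) *
        (∫ t in (0 : ℝ)..(2 * π), ‖(1 : ℂ) - (r : ℂ) ^ 2 * Complex.exp (t * Complex.I)‖⁻¹)
      ≤ ∫ ξ : Circle, ∫ η : Circle,
          ‖(1 : ℂ) - (r : ℂ) ^ 2 * (ξ : ℂ) * starRingEnd ℂ (η : ℂ)‖⁻¹ ∂τ ∂τ := by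
  have hr : |r ^ 2| < 1 := by rw [abs_of_nonneg (sq_nonneg r)]; nlinarith
  have hc := summable_kernelCoeff hr
  refine ⟨fun n ↦ ?_, ?_⟩
  · rw [hHat_eq_tsum hr n, ofReal_re, ofReal_im]
    exact ⟨tsum_nonneg fun kl ↦
      Set.indicator_nonneg (fun kl _ ↦ kernelCoeff_nonneg (sq_nonneg r) kl) kl, rfl⟩
  have hdiag := ofReal_injective ((hHat_zero r).symm.trans (hHat_eq_tsum hr 0))
  have hdouble := hasSum_integral_integral_of_hasSum_kernel (μ := τ) hc
    (f := fun kl (ξ : Circle) ↦ (ξ : ℂ) ^ kl.1 * conj (ξ : ℂ) ^ kl.2) (fun kl ↦ by fun_prop)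
    (fun kl ξ ↦ by simp [Circle.norm_coe])
    (fun ξ η ↦ by simpa only [ofReal_pow] using hasSum_circle_kernel hr ξ η)
  rw [hdiag]
  exact hasSum_le (indicator_diagonal_le_mul_normSq_moment τ (sq_nonneg r))
    (hc.indicator _).hasSum hdouble
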